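/- arXiv:2411.07296 — 2 statements merged into one kernel-verified Lean document; each statement's English description precedes it below -/
import Mathlib

section
/- Von Neumann's trace inequality: for complex n×n matrices A and B with singular values α₁ ≥ … ≥ α_n and β₁ ≥ … ≥ β_n respectively, |Tr[AB]| ≤ Σ_{i=1}^n α_i β_i. -/
open Matrix

/-- The singular values of a complex matrix (eigenvalues of `√(M†M)`). -/
noncomputable def singVals {n m : ℕ} (M : Matrix (Fin n) (Fin m) ℂ) : Fin m → ℝ :=
  fun i => Real.sqrt ((Matrix.isHermitian_conjTranspose_mul_self M).eigenvalues i)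

/-!
Write `A = U₁ Σ V₁ᴴ` and `B = U₂ T V₂ᴴ` as singular value decompositions. By cyclicity of the
trace, `Tr(AB) = ∑ᵢⱼ σᵢ Cᵢⱼ τⱼ Dⱼᵢ` with `C = V₁ᴴU₂` and `D = V₂ᴴU₁` unitary, so by AM–GM
`|Tr(AB)| ≤ (σ ⬝ S τ + σ ⬝ T τ) / 2`, where `Sᵢⱼ = |Cᵢⱼ|²` and `Tᵢⱼ = |Dⱼᵢ|²` are doubly
stochastic. By Birkhoff's theorem a doubly stochastic matrix is a convex combination of
permutation matrices, and for a permutation matrix the rearrangement inequality bounds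
`∑ᵢ σᵢ τ_{π i}` by the sum of products of the two sequences sorted the same way.
-/

section

variable {ι : Type*} [Fintype ι]

theorem Monovary.dotProduct_comp_perm_le_dotProduct_comp {σ τ : ι → ℝ} {e f : Equiv.Perm ι}
    (h : Monovary (σ ∘ e) (τ ∘ f)) (π : Equiv.Perm ι) :
    σ ⬝ᵥ (τ ∘ π) ≤ (σ ∘ e) ⬝ᵥ (τ ∘ f) :=
  calc σ ⬝ᵥ (τ ∘ π) = ∑ i, (σ ∘ e) i * (τ ∘ f) ((f.symm * π * e) i) := by
        rw [dotProduct, ← Equiv.sum_comp e]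
        simp
    _ ≤ _ := h.sum_mul_comp_perm_le_sum_mul

variable [DecidableEq ι]

theorem dotProduct_mulVec_le_of_mem_doublyStochastic {f g : ι → ℝ} {c : ℝ} {S : Matrix ι ι ℝ}
    (hS : S ∈ doublyStochastic ℝ ι) (h : ∀ π : Equiv.Perm ι, f ⬝ᵥ (g ∘ π) ≤ c) :
    f ⬝ᵥ S *ᵥ g ≤ c := by
  obtain ⟨w, hw0, hw1, rfl⟩ := exists_eq_sum_perm_of_mem_doublyStochastic hS
  calc f ⬝ᵥ (∑ π, w π • π.permMatrix ℝ) *ᵥ g = ∑ π, w π * f ⬝ᵥ (g ∘ π) := by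
        simp [sum_mulVec, smul_mulVec, permMatrix_mulVec, dotProduct_sum]
    _ ≤ ∑ π, w π * c := Finset.sum_le_sum fun π _ => mul_le_mul_of_nonneg_left (h π) (hw0 π)
    _ = c := by rw [← Finset.sum_mul, hw1, one_mul]

theorem Matrix.trace_diagonal_mul_mul_diagonal_mul {R : Type*} [CommSemiring R]
    (a b : ι → R) (C D : Matrix ι ι R) :
    trace (diagonal a * C * diagonal b * D) = ∑ i, ∑ j, a i * C i j * b j * D j i := by
  simp only [trace, diag_apply, mul_apply (M := diagonal a * C * diagonal b), mul_diagonal,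
    diagonal_mul]

variable {𝕜 : Type*} [RCLike 𝕜]

theorem Matrix.sum_norm_sq_row_of_mem_unitaryGroup {U : Matrix ι ι 𝕜} (hU : U ∈ unitaryGroup ι 𝕜)
    (i : ι) : ∑ j, ‖U i j‖ ^ 2 = 1 := by
  have h := congrFun₂ (mem_unitaryGroup_iff.mp hU) i i
  simp only [mul_apply, star_apply, RCLike.star_def, RCLike.mul_conj, one_apply_eq] at h
  exact_mod_cast h

theorem Matrix.of_norm_sq_mem_doublyStochastic {U : Matrix ι ι 𝕜} (hU : U ∈ unitaryGroup ι 𝕜) :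
    (of fun i j => ‖U i j‖ ^ 2) ∈ doublyStochastic ℝ ι := by
  refine mem_doublyStochastic_iff_sum.mpr ⟨fun _ _ => sq_nonneg _,
    sum_norm_sq_row_of_mem_unitaryGroup hU, fun j => ?_⟩
  simpa using sum_norm_sq_row_of_mem_unitaryGroup (Unitary.star_mem hU) j

theorem Matrix.norm_trace_diagonal_mul_mul_diagonal_mul_le {σ τ : ι → ℝ} (hσ : 0 ≤ σ)
    (hτ : 0 ≤ τ) {C D : Matrix ι ι 𝕜} (hC : C ∈ unitaryGroup ι 𝕜) (hD : D ∈ unitaryGroup ι 𝕜)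
    {c : ℝ} (h : ∀ π : Equiv.Perm ι, σ ⬝ᵥ (τ ∘ π) ≤ c) :
    ‖trace (diagonal (fun i => (σ i : 𝕜)) * C * diagonal (fun i => (τ i : 𝕜)) * D)‖ ≤ c := by
  set S : Matrix ι ι ℝ := of fun i j => ‖C i j‖ ^ 2
  set T : Matrix ι ι ℝ := of fun i j => ‖Dᴴ i j‖ ^ 2
  rw [trace_diagonal_mul_mul_diagonal_mul]
  calc ‖∑ i, ∑ j, (σ i : 𝕜) * C i j * τ j * D j i‖
      ≤ ∑ i, ∑ j, σ i * (‖C i j‖ * ‖D j i‖) * τ j := by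
        refine (norm_sum_le _ _).trans (Finset.sum_le_sum fun i _ => ?_)
        refine (norm_sum_le _ _).trans (Finset.sum_le_sum fun j _ => ?_)
        simp only [norm_mul, RCLike.norm_ofReal, abs_of_nonneg (hσ i), abs_of_nonneg (hτ j)]
        exact le_of_eq (by ring)
    _ ≤ ∑ i, ∑ j, σ i * ((S i j + T i j) / 2) * τ j := by
        gcongr with i _ j _
        · exact hτ j
        · exact hσ i
        · simp only [S, T, of_apply, conjTranspose_apply, norm_star]
          linarith [two_mul_le_add_sq ‖C i j‖ ‖D j i‖]
    _ = (σ ⬝ᵥ S *ᵥ τ + σ ⬝ᵥ T *ᵥ τ) / 2 := by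
        simp only [dotProduct, mulVec, Finset.mul_sum, ← Finset.sum_add_distrib, Finset.sum_div]
        exact Finset.sum_congr rfl fun i _ => Finset.sum_congr rfl fun j _ => by ring
    _ ≤ (c + c) / 2 := by
        gcongr
        · exact dotProduct_mulVec_le_of_mem_doublyStochastic (of_norm_sq_mem_doublyStochastic hC) h
        · exact dotProduct_mulVec_le_of_mem_doublyStochastic
            (of_norm_sq_mem_doublyStochastic (Unitary.star_mem hD)) h
    _ = c := by ring

theorem Matrix.exists_mem_unitaryGroup_eq_mul_diagonal {W : Matrix ι ι 𝕜} {d : ι → ℝ}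
    (hW : Wᴴ * W = diagonal fun i => (d i : 𝕜) ^ 2) :
    ∃ U ∈ unitaryGroup ι 𝕜, W = U * diagonal fun i => (d i : 𝕜) := by
  set w : ι → EuclideanSpace 𝕜 ι := fun j => WithLp.toLp 2 (fun i => W i j)
  have hinner (p q : ι) : inner 𝕜 (w p) (w q) = if p = q then (d p : 𝕜) ^ 2 else 0 := by
    trans (Wᴴ * W) p q
    · simp [w, EuclideanSpace.inner_eq_star_dotProduct, dotProduct, mul_apply, mul_comm]
    · rw [hW, diagonal_apply]
  -- the nonzero columns, normalized, extend to an orthonormal basis: its columns form `U`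
  set s : Set ι := {j | d j ≠ 0}
  have horth : Orthonormal 𝕜 (s.domRestrict fun j => (d j : 𝕜)⁻¹ • w j) := by
    rw [orthonormal_iff_ite]
    rintro ⟨p, hp⟩ ⟨q, -⟩
    have hp' : (d p : 𝕜) ≠ 0 := RCLike.ofReal_ne_zero.mpr hp
    simp only [Set.domRestrict_apply, inner_smul_left, inner_smul_right, hinner, Subtype.mk.injEq]
    split_ifs with hpq
    · subst hpq
      simp only [map_inv₀, RCLike.conj_ofReal]
      field_simp
    · simp
  obtain ⟨b, hb⟩ := horth.exists_orthonormalBasis_extension_of_card_eq (by simp)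
  refine ⟨(EuclideanSpace.basisFun ι 𝕜).toBasis.toMatrix b.toBasis,
    (EuclideanSpace.basisFun ι 𝕜).toMatrix_orthonormalBasis_mem_unitary b, ?_⟩
  ext i j
  rw [mul_diagonal]
  by_cases hj : d j = 0
  · have : w j = 0 := by simpa [hj] using hinner j j
    simpa [hj, w] using congrArg (· i) this
  · have hj' : (d j : 𝕜) ≠ 0 := RCLike.ofReal_ne_zero.mpr hj
    simp only [Module.Basis.toMatrix_apply, OrthonormalBasis.coe_toBasis,
      OrthonormalBasis.coe_toBasis_repr_apply, EuclideanSpace.basisFun_repr, hb j hj, w,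
      PiLp.smul_apply, smul_eq_mul]
    field_simp

end

theorem singVals_nonneg {n m : ℕ} (M : Matrix (Fin n) (Fin m) ℂ) : 0 ≤ singVals M :=
  fun _ => Real.sqrt_nonneg _

theorem sq_singVals {n m : ℕ} (M : Matrix (Fin n) (Fin m) ℂ) (i : Fin m) :
    singVals M i ^ 2 = (isHermitian_conjTranspose_mul_self M).eigenvalues i :=
  Real.sq_sqrt (eigenvalues_conjTranspose_mul_self_nonneg M i)

theorem exists_eq_mul_diagonal_singVals_mul {n : ℕ} (M : Matrix (Fin n) (Fin n) ℂ) :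
    ∃ U ∈ unitaryGroup (Fin n) ℂ, ∃ V ∈ unitaryGroup (Fin n) ℂ,
      M = U * diagonal (fun i => (singVals M i : ℂ)) * Vᴴ := by
  set hH := isHermitian_conjTranspose_mul_self M
  set V : Matrix (Fin n) (Fin n) ℂ := (hH.eigenvectorUnitary : Matrix (Fin n) (Fin n) ℂ)
  have hMV : (M * V)ᴴ * (M * V) = diagonal fun i => (singVals M i : ℂ) ^ 2 := by
    have hd := hH.conjStarAlgAut_star_eigenvectorUnitary
    rw [Unitary.conjStarAlgAut_star_apply] at hd
    calc (M * V)ᴴ * (M * V) = star V * (Mᴴ * M) * V := by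
          simp [conjTranspose_mul, star_eq_conjTranspose, Matrix.mul_assoc]
      _ = diagonal (RCLike.ofReal ∘ hH.eigenvalues) := hd
      _ = _ := by
          congr
          funext i
          rw [Function.comp_apply, ← sq_singVals]
          norm_cast
  obtain ⟨U, hU, hMVU⟩ := exists_mem_unitaryGroup_eq_mul_diagonal (d := singVals M) hMV
  refine ⟨U, hU, V, hH.eigenvectorUnitary.2, ?_⟩
  calc M = M * V * Vᴴ := by
        rw [Matrix.mul_assoc, ← star_eq_conjTranspose,
          Unitary.mul_star_self_of_mem hH.eigenvectorUnitary.2, mul_one]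
    _ = _ := congrArg (· * Vᴴ) hMVU

/-- von Neumann's trace inequality: For complex `n×n` matrices `A, B`
with singular values listed in decreasing order as `α₁ ≥ … ≥ αₙ` and
`β₁ ≥ … ≥ βₙ`, `|Tr[AB]| ≤ Σᵢ αᵢ βᵢ`. -/
theorem stmt13 {n : ℕ} (A B : Matrix (Fin n) (Fin n) ℂ) (α β : Fin n → ℝ)
    (hα : ∃ e : Equiv.Perm (Fin n), α = singVals A ∘ e) (hαa : Antitone α)
    (hβ : ∃ e : Equiv.Perm (Fin n), β = singVals B ∘ e) (hβa : Antitone β) :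
    ‖Matrix.trace (A * B)‖ ≤ ∑ i, α i * β i := by
  obtain ⟨e, rfl⟩ := hα
  obtain ⟨f, rfl⟩ := hβ
  obtain ⟨U₁, hU₁, V₁, hV₁, hA⟩ := exists_eq_mul_diagonal_singVals_mul A
  obtain ⟨U₂, hU₂, V₂, hV₂, hB⟩ := exists_eq_mul_diagonal_singVals_mul B
  have htrace : trace (A * B) = trace (diagonal (fun i => (singVals A i : ℂ)) * (V₁ᴴ * U₂) *
      diagonal (fun i => (singVals B i : ℂ)) * (V₂ᴴ * U₁)) := by
    conv_lhs => rw [hA, hB]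
    rw [Matrix.mul_assoc, Matrix.mul_assoc, trace_mul_comm U₁]
    simp only [Matrix.mul_assoc]
  rw [htrace, ← star_eq_conjTranspose, ← star_eq_conjTranspose]
  exact norm_trace_diagonal_mul_mul_diagonal_mul_le (singVals_nonneg A) (singVals_nonneg B)
    (mul_mem (Unitary.star_mem hV₁) hU₂) (mul_mem (Unitary.star_mem hV₂) hU₁)
    (hαa.monovary hβa).dotProduct_comp_perm_le_dotProduct_comp
end

section
/- Let V : A → B be a linear map between finite-dimensional Hilbert spaces satisfying ‖V†V − I‖₂ ≤ δ (spectral norm), and write V = U V_D Q for a singular value decomposition where V_D = V₀ + V₁ with V₀ the rectangular diagonal matrix of all 1's. Set W = U V₀ Q and Δ = U V₁ Q. Then for any unitary O on A, defining Õ = W O W†, one has ‖Õ V − V O‖₂ ≤ δ√(1+δ) + 2(1+δ)(√(1+δ) − 1) + √(1+δ)(√(1+δ) − 1)². -/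
open Matrix

/-- The operator (spectral) norm of a complex matrix, i.e. the norm of the induced
map between Euclidean spaces (equal to the largest singular value). -/
noncomputable def specNorm {m n : ℕ} (M : Matrix (Fin m) (Fin n) ℂ) : ℝ :=
  ‖LinearMap.toContinuousLinearMap (Matrix.toEuclideanLin M)‖

/-!
Write `V = W + Δ` with `W = U V₀ Q` an isometry. Since `W†W = 1`,
`W O W† V - V O = W O W† Δ - Δ O`, so `‖Õ V - V O‖ ≤ 2 ‖Δ‖`. Up to the unitaries `U` and `Q`,
`Δ` is the diagonal matrix of the `σⱼ - 1` and `V†V - 1` that of the `σⱼ² - 1`, and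
`|σ - 1| ≤ |σ² - 1|` for `σ ≥ 0`; hence `‖Δ‖ ≤ δ`, and `2δ` is below the stated bound.
-/

open scoped Matrix.Norms.L2Operator

lemma abs_sub_one_le_abs_sq_sub_one {r : ℝ} (hr : 0 ≤ r) : |r - 1| ≤ |r ^ 2 - 1| := by
  rw [show r ^ 2 - 1 = (r - 1) * (r + 1) by ring, abs_mul]
  exact le_mul_of_one_le_right (abs_nonneg _) (by rw [abs_of_nonneg (by linarith)]; linarith)

namespace Matrix

section Algebra

variable {R : Type*} [Semiring R] [StarRing R] {l m n : Type*} [Fintype m] [Fintype n]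

lemma conjTranspose_mul_self_mul_eq_one [DecidableEq l] [DecidableEq n] {A : Matrix m n R}
    {B : Matrix n l R} (hA : Aᴴ * A = 1) (hB : Bᴴ * B = 1) : (A * B)ᴴ * (A * B) = 1 := by
  rw [conjTranspose_mul, Matrix.mul_assoc, ← Matrix.mul_assoc Aᴴ, hA, Matrix.one_mul, hB]

end Algebra

def rectOne (R : Type*) [Zero R] [One R] (m n : ℕ) : Matrix (Fin m) (Fin n) R :=
  of fun i j => if i.val = j.val then 1 else 0

section rectOne

variable {R : Type*} {m n : ℕ}

lemma rectOne_eq_submatrix_one [Zero R] [One R] (h : n ≤ m) :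
    rectOne R m n = (1 : Matrix (Fin m) (Fin m) R).submatrix id (Fin.castLE h) := by
  ext i j
  simp [rectOne, one_apply, Fin.ext_iff]

lemma conjTranspose_rectOne_mul_rectOne [Semiring R] [StarRing R] (h : n ≤ m) :
    (rectOne R m n)ᴴ * rectOne R m n = 1 := by
  rw [rectOne_eq_submatrix_one h, conjTranspose_submatrix, conjTranspose_one,
    ← submatrix_mul _ _ _ _ _ Function.bijective_id, Matrix.one_mul,
    submatrix_one _ (Fin.castLE_injective h)]

lemma eq_rectOne_mul_diagonal [Semiring R] (h : n ≤ m) {D : Matrix (Fin m) (Fin n) R}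
    {d : Fin n → R} (hD : ∀ i j, i.val ≠ j.val → D i j = 0)
    (hd : ∀ j, D (Fin.castLE h j) j = d j) : D = rectOne R m n * diagonal d := by
  ext i j
  rw [mul_diagonal, rectOne, of_apply]
  split_ifs with hij
  · rw [one_mul, ← hd]; congr; ext; exact hij
  · rw [zero_mul, hD i j hij]

end rectOne

section L2OpNorm

variable {𝕜 : Type*} [RCLike 𝕜] {l m n : Type*} [Fintype l] [Fintype m] [Fintype n]

lemma l2_opNorm_isometry_mul [DecidableEq l] [DecidableEq n] {W : Matrix m n 𝕜}
    (hW : Wᴴ * W = 1) (A : Matrix n l 𝕜) : ‖W * A‖ = ‖A‖ := by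
  have h : ‖W * A‖ * ‖W * A‖ = ‖A‖ * ‖A‖ := by
    rw [← l2_opNorm_conjTranspose_mul_self, ← l2_opNorm_conjTranspose_mul_self,
      conjTranspose_mul, Matrix.mul_assoc, ← Matrix.mul_assoc Wᴴ, hW, Matrix.one_mul]
  exact (mul_self_inj (norm_nonneg _) (norm_nonneg _)).mp h

lemma l2_opNorm_mul_coisometry [DecidableEq l] [DecidableEq m] [DecidableEq n]
    {Q : Matrix m n 𝕜} (hQ : Q * Qᴴ = 1) (A : Matrix l m 𝕜) : ‖A * Q‖ = ‖A‖ := by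
  rw [← l2_opNorm_conjTranspose, conjTranspose_mul,
    l2_opNorm_isometry_mul (by rwa [conjTranspose_conjTranspose]), l2_opNorm_conjTranspose]

lemma l2_opNorm_le_one_of_isometry [DecidableEq n] {W : Matrix m n 𝕜} (hW : Wᴴ * W = 1) :
    ‖W‖ ≤ 1 := by
  rw [← Matrix.mul_one W, l2_opNorm_isometry_mul hW, ← diagonal_one, l2_opNorm_diagonal]
  exact (pi_norm_le_iff_of_nonneg zero_le_one).mpr fun _ => by simp

lemma l2_opNorm_isometry_conj_mul_sub_le [DecidableEq m] [DecidableEq n] {W V : Matrix m n 𝕜}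
    (hW : Wᴴ * W = 1) {O : Matrix n n 𝕜} (hO : ‖O‖ ≤ 1) :
    ‖W * O * Wᴴ * V - V * O‖ ≤ 2 * ‖V - W‖ := by
  have hsplit : W * O * Wᴴ * V - V * O = W * O * (Wᴴ * (V - W)) - (V - W) * O := by
    rw [Matrix.mul_sub Wᴴ, hW, Matrix.mul_sub, Matrix.mul_one, Matrix.sub_mul,
      ← Matrix.mul_assoc]
    abel
  have hWn := l2_opNorm_le_one_of_isometry hW
  rw [hsplit]
  calc ‖W * O * (Wᴴ * (V - W)) - (V - W) * O‖
      ≤ ‖W‖ * ‖O‖ * (‖Wᴴ‖ * ‖V - W‖) + ‖V - W‖ * ‖O‖ := by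
        grw [norm_sub_le, l2_opNorm_mul, l2_opNorm_mul, l2_opNorm_mul, l2_opNorm_mul]
    _ ≤ 1 * 1 * (1 * ‖V - W‖) + ‖V - W‖ * 1 := by
        rw [l2_opNorm_conjTranspose]; gcongr
    _ = 2 * ‖V - W‖ := by ring

lemma l2_opNorm_diagonal_ofReal_sub_one_le [DecidableEq n] {r : n → ℝ} (hr : ∀ j, 0 ≤ r j) :
    ‖diagonal (fun j => (r j : 𝕜)) - 1‖ ≤ ‖diagonal (fun j => ((r j ^ 2 : ℝ) : 𝕜)) - 1‖ := by
  rw [← diagonal_one, diagonal_sub, diagonal_sub, l2_opNorm_diagonal, l2_opNorm_diagonal]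
  refine (pi_norm_le_iff_of_nonneg (norm_nonneg _)).mpr fun j => ?_
  refine le_trans ?_ (norm_le_pi_norm _ j)
  rw [← RCLike.ofReal_one, ← RCLike.ofReal_sub, ← RCLike.ofReal_sub, RCLike.norm_ofReal,
    RCLike.norm_ofReal]
  exact abs_sub_one_le_abs_sq_sub_one (hr j)

lemma l2_opNorm_sub_le_of_eq_isometry_mul_diagonal_mul [DecidableEq m] [DecidableEq n]
    {E : Matrix m n 𝕜} (hE : Eᴴ * E = 1) {Q : Matrix n n 𝕜} (hQ : Q ∈ unitaryGroup n 𝕜)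
    {r : n → ℝ} (hr : ∀ j, 0 ≤ r j) {V : Matrix m n 𝕜}
    (hVeq : V = E * diagonal (fun j => (r j : 𝕜)) * Q) :
    ‖V - E * Q‖ ≤ ‖Vᴴ * V - 1‖ := by
  have hQ₁ : Qᴴ * Q = 1 := mem_unitaryGroup_iff'.mp hQ
  have hQ₂ : Q * Qᴴ = 1 := mem_unitaryGroup_iff.mp hQ
  have hQ₂' : Qᴴᴴ * Qᴴ = 1 := by rwa [conjTranspose_conjTranspose]
  have hsub : V - E * Q = E * (diagonal (fun j => (r j : 𝕜)) - 1) * Q := by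
    rw [hVeq, Matrix.mul_sub, Matrix.sub_mul, Matrix.mul_one]
  have hgram : Vᴴ * V - 1 = Qᴴ * (diagonal (fun j => ((r j ^ 2 : ℝ) : 𝕜)) - 1) * Q := by
    rw [hVeq, Matrix.mul_sub, Matrix.sub_mul, Matrix.mul_one, hQ₁]
    congr 1
    simp only [conjTranspose_mul, diagonal_conjTranspose, Matrix.mul_assoc]
    rw [← Matrix.mul_assoc Eᴴ, hE, Matrix.one_mul, ← Matrix.mul_assoc (diagonal _),
      diagonal_mul_diagonal]
    congr 3
    ext j
    simp [pow_two]
  rw [hsub, hgram, l2_opNorm_mul_coisometry hQ₂, l2_opNorm_isometry_mul hE,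
    l2_opNorm_mul_coisometry hQ₂, l2_opNorm_isometry_mul hQ₂']
  exact l2_opNorm_diagonal_ofReal_sub_one_le hr

end L2OpNorm

end Matrix

theorem stmt19_general {a b : ℕ} (hab : a ≤ b)
    (V VD : Matrix (Fin b) (Fin a) ℂ)
    (U : Matrix (Fin b) (Fin b) ℂ) (hU : U ∈ Matrix.unitaryGroup (Fin b) ℂ)
    (Q : Matrix (Fin a) (Fin a) ℂ) (hQ : Q ∈ Matrix.unitaryGroup (Fin a) ℂ)
    (hVD_diag : ∀ (i : Fin b) (j : Fin a), i.val ≠ j.val → VD i j = 0)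
    (hVD_pos : ∀ (i : Fin b) (j : Fin a), i.val = j.val →
      ∃ r : ℝ, 0 ≤ r ∧ VD i j = (r : ℂ))
    (hSVD : V = U * VD * Q)
    (δ : ℝ) (hV : specNorm (Vᴴ * V - 1) ≤ δ)
    (O : Matrix (Fin a) (Fin a) ℂ) (hO : O ∈ Matrix.unitaryGroup (Fin a) ℂ) :
    specNorm
        ((U * (Matrix.of fun (i : Fin b) (j : Fin a) =>
            if i.val = j.val then (1 : ℂ) else 0) * Q) * O
          * (U * (Matrix.of fun (i : Fin b) (j : Fin a) =>
            if i.val = j.val then (1 : ℂ) else 0) * Q)ᴴ * V - V * O)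
      ≤ δ * Real.sqrt (1 + δ) + 2 * (1 + δ) * (Real.sqrt (1 + δ) - 1)
          + Real.sqrt (1 + δ) * (Real.sqrt (1 + δ) - 1) ^ 2 := by
  -- `specNorm` is definitionally the L2 operator norm, and `V₀` is definitionally `rectOne ℂ b a`.
  choose r hr hVDr using fun j : Fin a => hVD_pos (Fin.castLE hab j) j rfl
  set E := U * rectOne ℂ b a
  have hE : Eᴴ * E = 1 :=
    conjTranspose_mul_self_mul_eq_one (mem_unitaryGroup_iff'.mp hU)
      (conjTranspose_rectOne_mul_rectOne hab)
  have hVeq : V = E * diagonal (fun j => (r j : ℂ)) * Q := by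
    rw [hSVD, eq_rectOne_mul_diagonal hab hVD_diag hVDr, ← Matrix.mul_assoc]
  have hΔ : ‖V - E * Q‖ ≤ δ :=
    (l2_opNorm_sub_le_of_eq_isometry_mul_diagonal_mul hE hQ hr hVeq).trans hV
  have hW : (E * Q)ᴴ * (E * Q) = 1 :=
    conjTranspose_mul_self_mul_eq_one hE (mem_unitaryGroup_iff'.mp hQ)
  have hOn : ‖O‖ ≤ 1 := l2_opNorm_le_one_of_isometry (mem_unitaryGroup_iff'.mp hO)
  have hδ : 0 ≤ δ := (norm_nonneg _).trans hΔ
  have hs : (1 : ℝ) ≤ √(1 + δ) := Real.one_le_sqrt.mpr (by linarith)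
  have hs2 : √(1 + δ) ^ 2 = 1 + δ := Real.sq_sqrt (by linarith)
  calc ‖E * Q * O * (E * Q)ᴴ * V - V * O‖ ≤ 2 * ‖V - E * Q‖ :=
        l2_opNorm_isometry_conj_mul_sub_le hW hOn
    _ ≤ 2 * δ := by gcongr
    _ ≤ _ := by
        nlinarith [mul_nonneg (sq_nonneg (√(1 + δ) - 1)) (by linarith : (0 : ℝ) ≤ 2 * √(1 + δ) + 1)]

/-- Let `V = U V_D Q` be a singular value decomposition of
`V : A → B` (with `U, Q` unitary and `V_D` rectangular diagonal with nonnegative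
entries), with `‖V†V − I‖₂ ≤ δ`. Write `V_D = V₀ + V₁` with `V₀` the rectangular
diagonal matrix of all `1`'s, and set `W = U V₀ Q`. Then for any unitary `O` on
`A`, the unitary `Ot = W O W†` satisfies
`‖Ot V − V O‖₂ ≤ δ√(1+δ) + 2(1+δ)(√(1+δ)−1) + √(1+δ)(√(1+δ)−1)²`. -/
theorem stmt19 {a b : ℕ} (hab : a ≤ b)
    (V VD : Matrix (Fin b) (Fin a) ℂ)
    (U : Matrix (Fin b) (Fin b) ℂ) (hU : U ∈ Matrix.unitaryGroup (Fin b) ℂ)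
    (Q : Matrix (Fin a) (Fin a) ℂ) (hQ : Q ∈ Matrix.unitaryGroup (Fin a) ℂ)
    (hVD_diag : ∀ (i : Fin b) (j : Fin a), i.val ≠ j.val → VD i j = 0)
    (hVD_pos : ∀ (i : Fin b) (j : Fin a), i.val = j.val →
      ∃ r : ℝ, 0 ≤ r ∧ VD i j = (r : ℂ))
    (hSVD : V = U * VD * Q)
    (δ : ℝ) (hδ : 0 ≤ δ) (hV : specNorm (Vᴴ * V - 1) ≤ δ)
    (O : Matrix (Fin a) (Fin a) ℂ) (hO : O ∈ Matrix.unitaryGroup (Fin a) ℂ) :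
    specNorm
        ((U * (Matrix.of fun (i : Fin b) (j : Fin a) =>
            if i.val = j.val then (1 : ℂ) else 0) * Q) * O
          * (U * (Matrix.of fun (i : Fin b) (j : Fin a) =>
            if i.val = j.val then (1 : ℂ) else 0) * Q)ᴴ * V - V * O)
      ≤ δ * Real.sqrt (1 + δ) + 2 * (1 + δ) * (Real.sqrt (1 + δ) - 1)
          + Real.sqrt (1 + δ) * (Real.sqrt (1 + δ) - 1) ^ 2 :=
  stmt19_general hab V VD U hU Q hQ hVD_diag hVD_pos hSVD δ hV O hO
end
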